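/- arXiv:math/0409237 — 3 statements merged into one kernel-verified Lean document; each statement's English description precedes it below -/
import Mathlib

section
/- Let B : ∏ⱼ Fin aⱼ → 𝕂 be any Δ-independent table over a field 𝕂 whose total sum of entries equals 1. Define B^I(i₁,…,iₙ) = ∏ⱼ m_j(iⱼ), where m_j is the 1-dimensional margin of B in coordinate j, and B⁰ = B − B^I. Then B^I is completely independent and for every J ∈ Δ the J-margin of B⁰ is identically 0. -/
/-!
If the `J`-margin of `B` is `∏ j ∈ J, y j (i j)`, summing out a coordinate `j ∈ J` multiplies it
by `S j = ∑ v, y j v`. Summing out all of `J` gives `∏ j ∈ J, S j = ∑ B = 1`, and keeping only `j`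
gives `m_j = y j / S j`; hence the `J`-margin of `B` is `∏ j ∈ J, m_j`. Since every `m_j` sums
to `1`, this is also the `J`-margin of `Bᴵ`.
-/

open Finset

/-- The `J`-margin of an `n`-dimensional table over a field: sum over all coordinates
not in `J`. -/
noncomputable def margin (𝕂 : Type*) [Field 𝕂] {n : ℕ} {a : Fin n → ℕ}
    (A : (∀ j, Fin (a j)) → 𝕂) (J : Finset (Fin n)) (i : ∀ j, Fin (a j)) : 𝕂 :=
  ∑ k ∈ univ.filter (fun k : ∀ j, Fin (a j) => ∀ j ∈ J, k j = i j), A k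

/-- The one-dimensional margin `m_j` of a table. -/
def marginal {M : Type*} [AddCommMonoid M] {n : ℕ} {a : Fin n → ℕ}
    (A : (∀ j, Fin (a j)) → M) (j : Fin n) (v : Fin (a j)) : M :=
  ∑ k ∈ univ.filter (fun k : ∀ j, Fin (a j) => k j = v), A k

theorem sum_marginal {M : Type*} [AddCommMonoid M] {n : ℕ} {a : Fin n → ℕ}
    (A : (∀ j, Fin (a j)) → M) (j : Fin n) : ∑ v, marginal A j v = ∑ k, A k :=
  sum_fiberwise_of_maps_to (fun _ _ => mem_univ _) A

section

variable {𝕂 : Type*} [Field 𝕂] {n : ℕ} {a : Fin n → ℕ}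

theorem margin_univ (A : (∀ j, Fin (a j)) → 𝕂) (i : ∀ j, Fin (a j)) :
    margin 𝕂 A univ i = A i := by
  simp [margin, ← funext_iff, filter_eq']

theorem margin_empty (A : (∀ j, Fin (a j)) → 𝕂) (i : ∀ j, Fin (a j)) :
    margin 𝕂 A ∅ i = ∑ k, A k := by
  simp [margin]

theorem margin_singleton (A : (∀ j, Fin (a j)) → 𝕂) (j : Fin n) (i : ∀ j, Fin (a j)) :
    margin 𝕂 A {j} i = marginal A j (i j) := by
  simp [margin, marginal]

theorem margin_sub (A A' : (∀ j, Fin (a j)) → 𝕂) (J : Finset (Fin n)) (i : ∀ j, Fin (a j)) :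
    margin 𝕂 (fun k => A k - A' k) J i = margin 𝕂 A J i - margin 𝕂 A' J i :=
  sum_sub_distrib _ _

theorem margin_eq_sum_margin_insert (A : (∀ j, Fin (a j)) → 𝕂) {J : Finset (Fin n)} {j : Fin n}
    (hj : j ∉ J) (i : ∀ j, Fin (a j)) :
    margin 𝕂 A J i = ∑ v, margin 𝕂 A (insert j J) (Function.update i j v) := by
  unfold margin
  rw [← sum_fiberwise_of_maps_to (g := fun k : ∀ j, Fin (a j) => k j) (fun _ _ => mem_univ _)]
  refine sum_congr rfl fun v _ => sum_congr ?_ fun _ _ => rfl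
  ext k
  simp only [mem_filter, mem_univ, true_and, forall_mem_insert, Function.update_self]
  constructor
  · rintro ⟨hJ, rfl⟩
    refine ⟨rfl, fun j' hj' => ?_⟩
    rw [Function.update_of_ne (ne_of_mem_of_not_mem hj' hj), hJ j' hj']
  · rintro ⟨rfl, hJ⟩
    refine ⟨fun j' hj' => ?_, rfl⟩
    rw [hJ j' hj', Function.update_of_ne (ne_of_mem_of_not_mem hj' hj)]

/-- The scalar `c` absorbs the factors `∑ v, y j v` produced by summing out coordinates of `J`. -/
def MarginFactors (A : (∀ j, Fin (a j)) → 𝕂) (J : Finset (Fin n)) (c : 𝕂)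
    (y : ∀ j, Fin (a j) → 𝕂) : Prop :=
  ∀ i, margin 𝕂 A J i = c * ∏ j ∈ J, y j (i j)

namespace MarginFactors

variable {A : (∀ j, Fin (a j)) → 𝕂} {J : Finset (Fin n)} {c : 𝕂} {y : ∀ j, Fin (a j) → 𝕂}

theorem erase (h : MarginFactors A J c y) {j : Fin n} (hj : j ∈ J) :
    MarginFactors A (J.erase j) (c * ∑ v, y j v) y := by
  intro i
  have hupdate : ∀ v, ∏ j' ∈ J, y j' (Function.update i j v j') =
      y j v * ∏ j' ∈ J.erase j, y j' (i j') := fun v => by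
    rw [← mul_prod_erase _ _ hj, Function.update_self]
    exact congrArg _ (prod_congr rfl fun j' hj' => by
      rw [Function.update_of_ne (ne_of_mem_erase hj')])
  rw [margin_eq_sum_margin_insert A (notMem_erase j J) i, insert_erase hj]
  simp only [h _, hupdate, mul_sum, sum_mul, mul_assoc]

theorem sdiff (h : MarginFactors A J c y) {D : Finset (Fin n)} (hD : D ⊆ J) :
    MarginFactors A (J \ D) (c * ∏ j ∈ D, ∑ v, y j v) y := by
  induction D using Finset.induction_on with
  | empty => simpa using h
  | insert j D hj ih =>
    have hjJD : j ∈ J \ D := mem_sdiff.2 ⟨hD (mem_insert_self j D), hj⟩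
    rw [sdiff_insert, prod_insert hj, mul_left_comm, mul_comm]
    exact (ih ((subset_insert j D).trans hD)).erase hjJD

theorem mono (h : MarginFactors A J c y) {J' : Finset (Fin n)} (hJ' : J' ⊆ J) :
    MarginFactors A J' (c * ∏ j ∈ J \ J', ∑ v, y j v) y := by
  simpa only [Finset.sdiff_sdiff_eq_self hJ'] using h.sdiff (sdiff_subset (s := J) (t := J'))

end MarginFactors

theorem margin_eq_prod_marginal_of_marginFactors {A : (∀ j, Fin (a j)) → 𝕂}
    {J : Finset (Fin n)} {y : ∀ j, Fin (a j) → 𝕂} (h : MarginFactors A J 1 y)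
    (hA : ∑ k, A k = 1) (i : ∀ j, Fin (a j)) :
    margin 𝕂 A J i = ∏ j ∈ J, marginal A j (i j) := by
  have htotal : ∏ j ∈ J, ∑ v, y j v = 1 := by
    simpa [margin_empty, hA] using (h.mono (empty_subset J) i).symm
  have hmarginal : ∀ j ∈ J, marginal A j (i j) = y j (i j) / ∑ v, y j v := fun j hj => by
    have hsum : ∑ v, y j v ≠ 0 := prod_ne_zero_iff.1 (htotal ▸ one_ne_zero) j hj
    rw [← margin_singleton, h.mono (singleton_subset_iff.2 hj) i, eq_div_iff hsum,
      prod_singleton, one_mul, mul_right_comm, sdiff_singleton_eq_erase, prod_erase_mul _ _ hj,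
      htotal, one_mul]
  rw [h i, one_mul, prod_congr rfl hmarginal, prod_div_distrib, htotal, div_one]

theorem margin_eq_prod_of_eq_prod {A : (∀ j, Fin (a j)) → 𝕂} {y : ∀ j, Fin (a j) → 𝕂}
    (hA : ∀ i, A i = ∏ j, y j (i j)) (hy : ∀ j, ∑ v, y j v = 1) (J : Finset (Fin n))
    (i : ∀ j, Fin (a j)) : margin 𝕂 A J i = ∏ j ∈ J, y j (i j) := by
  have h : MarginFactors A univ 1 y := fun i => by rw [margin_univ, hA, one_mul]
  rw [h.mono (subset_univ J) i, prod_eq_one fun j _ => hy j, one_mul, one_mul]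

end

theorem delta_independent_decomposition_general (𝕂 : Type*) [Field 𝕂] {n : ℕ} {a : Fin n → ℕ}
    (Δ : Set (Finset (Fin n)))
    (B : (∀ j, Fin (a j)) → 𝕂)
    (hB : ∀ J ∈ Δ, ∃ y : ∀ j, Fin (a j) → 𝕂, ∀ i, margin 𝕂 B J i = ∏ j ∈ J, y j (i j))
    (hsum : ∑ i, B i = 1)
    (BI : (∀ j, Fin (a j)) → 𝕂) (hBI : ∀ i, BI i = ∏ j, margin 𝕂 B {j} i) :
    (∃ y : ∀ j, Fin (a j) → 𝕂, ∀ i, BI i = ∏ j, y j (i j)) ∧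
    (∀ J ∈ Δ, ∀ i, margin 𝕂 (fun k => B k - BI k) J i = 0) := by
  have hBI_marginal : ∀ i, BI i = ∏ j, marginal B j (i j) := fun i => by
    simp only [hBI, margin_singleton]
  refine ⟨⟨marginal B, hBI_marginal⟩, fun J hJ i => ?_⟩
  obtain ⟨y, hy⟩ := hB J hJ
  have hBJ : MarginFactors B J 1 y := fun i => by rw [hy, one_mul]
  rw [margin_sub, margin_eq_prod_marginal_of_marginFactors hBJ hsum,
    margin_eq_prod_of_eq_prod hBI_marginal (fun j => (sum_marginal B j).trans hsum), sub_self]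

/-- If `B` is a `Δ`-independent table with total sum `1` over a field `𝕂`, and
`Bᴵ i = ∏ⱼ mⱼ(iⱼ)` is the product of the 1-dimensional margins of `B`, then `Bᴵ` is
completely independent and every `Δ`-margin of `B⁰ = B - Bᴵ` is identically zero. -/
theorem delta_independent_decomposition (𝕂 : Type*) [Field 𝕂] {n : ℕ} {a : Fin n → ℕ}
    (Δ : Set (Finset (Fin n))) (hΔ : ∀ J ∈ Δ, ∀ J' ⊆ J, J' ∈ Δ)
    (B : (∀ j, Fin (a j)) → 𝕂)
    (hB : ∀ J ∈ Δ, ∃ y : ∀ j, Fin (a j) → 𝕂, ∀ i, margin 𝕂 B J i = ∏ j ∈ J, y j (i j))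
    (hsum : ∑ i, B i = 1)
    (BI : (∀ j, Fin (a j)) → 𝕂) (hBI : ∀ i, BI i = ∏ j, margin 𝕂 B {j} i) :
    (∃ y : ∀ j, Fin (a j) → 𝕂, ∀ i, BI i = ∏ j, y j (i j)) ∧
    (∀ J ∈ Δ, ∀ i, margin 𝕂 (fun k => B k - BI k) J i = 0) :=
  delta_independent_decomposition_general 𝕂 Δ B hB hsum BI hBI
end

section
/- Let 𝕂 be a field and consider 2×2×2 tables B : Fin 2 × Fin 2 × Fin 2 → 𝕂. Suppose all three 2-margins B_{12}, B_{13}, B_{23} (each a 2×2 matrix obtained by summing out one coordinate) have vanishing determinant, and the total sum of entries of B is nonzero. Then B can be written as B^I + B⁰ where B^I(i,j,k) = m₁(i)m₂(j)m₃(k)/s² (with m_r the 1-margins and s the total sum) and all three 2-margins of B⁰ are identically zero. -/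
/-!
For a 2×2 matrix `M` with row sums `r`, column sums `c` and total `s`, one has
`M i j * s - r i * c j = ± det M`. Hence a 2-margin of `B` with vanishing determinant is the
outer product of its own 1-margins divided by `s`. Since every 1-margin of `B` sums to `s`,
this outer product is also the corresponding 2-margin of `Bᴵ`, so `B⁰ := B - Bᴵ` has vanishing
2-margins.
-/

open Finset

theorem mul_sum_sum_eq_sum_mul_sum_of_fin_two {R : Type*} [CommRing R] (M : Fin 2 → Fin 2 → R)
    (h : M 0 0 * M 1 1 = M 0 1 * M 1 0) (i j : Fin 2) :
    M i j * ∑ i', ∑ j', M i' j' = (∑ j', M i j') * ∑ i', M i' j := by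
  revert i j
  simp only [Fin.forall_fin_two, Fin.sum_univ_two]
  refine ⟨⟨?_, ?_⟩, ?_, ?_⟩
  · linear_combination h
  · linear_combination -h
  · linear_combination -h
  · linear_combination h

theorem sum_sub_div_sq_eq_zero {κ 𝕂 : Type*} [Fintype κ] [Field 𝕂] {f g : κ → 𝕂} {p s : 𝕂}
    (hs : s ≠ 0) (hf : (∑ k, f k) * s = p) (hg : ∑ k, g k = p * s) :
    ∑ k, (f k - g k / s ^ 2) = 0 := by
  rw [sum_sub_distrib, ← sum_div, hg, ← hf]
  field_simp
  ring

/-- A 2×2×2 table over a field whose three 2-margins have vanishing determinant and whose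
total sum is nonzero decomposes as `Bᴵ + B⁰`, where `Bᴵ i j k = m₁ i * m₂ j * m₃ k / s²`
and every 2-margin of `B⁰` vanishes. -/
theorem two_cube_decomposition (𝕂 : Type*) [Field 𝕂] (B : Fin 2 → Fin 2 → Fin 2 → 𝕂)
    (h12 : (∑ k, B 0 0 k) * (∑ k, B 1 1 k) = (∑ k, B 0 1 k) * (∑ k, B 1 0 k))
    (h13 : (∑ j, B 0 j 0) * (∑ j, B 1 j 1) = (∑ j, B 0 j 1) * (∑ j, B 1 j 0))
    (h23 : (∑ i, B i 0 0) * (∑ i, B i 1 1) = (∑ i, B i 0 1) * (∑ i, B i 1 0))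
    (hs : (∑ i, ∑ j, ∑ k, B i j k) ≠ 0) :
    ∃ B0 : Fin 2 → Fin 2 → Fin 2 → 𝕂,
      (∀ i j k, B i j k =
          (∑ j', ∑ k', B i j' k') * (∑ i', ∑ k', B i' j k') * (∑ i', ∑ j', B i' j' k)
            / (∑ i', ∑ j', ∑ k', B i' j' k') ^ 2
          + B0 i j k) ∧
      (∀ i j, ∑ k, B0 i j k = 0) ∧
      (∀ i k, ∑ j, B0 i j k = 0) ∧
      (∀ j k, ∑ i, B0 i j k = 0) := by
  have swap_jk : ∀ i, ∑ k, ∑ j, B i j k = ∑ j, ∑ k, B i j k := fun _ => sum_comm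
  have swap_ik : ∀ j, ∑ k, ∑ i, B i j k = ∑ i, ∑ k, B i j k := fun _ => sum_comm
  have swap_ij : ∀ k, ∑ j, ∑ i, B i j k = ∑ i, ∑ j, B i j k := fun _ => sum_comm
  have swap_total : ∑ j, ∑ i, ∑ k, B i j k = ∑ i, ∑ j, ∑ k, B i j k := sum_comm
  have cycle_total : ∑ k, ∑ i, ∑ j, B i j k = ∑ i, ∑ j, ∑ k, B i j k := by
    rw [sum_comm]; simp only [swap_jk]
  have hB₁₂ := mul_sum_sum_eq_sum_mul_sum_of_fin_two (fun i j => ∑ k, B i j k) h12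
  have hB₁₃ := mul_sum_sum_eq_sum_mul_sum_of_fin_two (fun i k => ∑ j, B i j k) h13
  have hB₂₃ := mul_sum_sum_eq_sum_mul_sum_of_fin_two (fun j k => ∑ i, B i j k) h23
  simp only [swap_jk, swap_ik, swap_ij, swap_total] at hB₁₃ hB₂₃
  refine ⟨fun i j k => B i j k - (∑ j', ∑ k', B i j' k') * (∑ i', ∑ k', B i' j k') *
    (∑ i', ∑ j', B i' j' k) / (∑ i', ∑ j', ∑ k', B i' j' k') ^ 2,
    fun i j k => (add_sub_cancel _ _).symm, fun i j => ?_, fun i k => ?_, fun j k => ?_⟩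
  · refine sum_sub_div_sq_eq_zero hs (hB₁₂ i j) ?_
    rw [← mul_sum, cycle_total]
  · refine sum_sub_div_sq_eq_zero hs (hB₁₃ i k) ?_
    rw [← sum_mul, ← mul_sum, swap_total, mul_right_comm]
  · refine sum_sub_div_sq_eq_zero hs (hB₂₃ j k) ?_
    rw [← sum_mul, ← sum_mul, mul_assoc, mul_comm]
end

section
/- Let 𝕂 be an algebraically closed field and let R, S be finitely generated 𝕂-algebras that are integral domains. Then R ⊗_𝕂 S is an integral domain. -/
/-!
By the Nullstellensatz, an element of a reduced finitely generated algebra over an algebraically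
closed field `𝕂` is zero once it vanishes at every `𝕂`-point `φ : R →ₐ[𝕂] 𝕂`. Expand `z, w ∈ R ⊗ S`
in a `𝕂`-basis of `S`. If `z * w = 0`, then at each point `φ` the images of `z` and `w` in
`𝕂 ⊗ S ≃ S` multiply to zero, so all coefficients of `z` or all coefficients of `w` vanish at `φ`.
Hence every product of a coefficient of `z` with one of `w` vanishes at every point, so is zero,
and since `R` is a domain, `z = 0` or `w = 0`.
-/

open TensorProduct

theorem Ideal.IsMaximal.exists_algHom_ker_eq {𝕂 R : Type*} [Field 𝕂] [IsAlgClosed 𝕂] [CommRing R]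
    [Algebra 𝕂 R] [Algebra.FiniteType 𝕂 R] (m : Ideal R) [m.IsMaximal] :
    ∃ φ : R →ₐ[𝕂] 𝕂, RingHom.ker φ = m := by
  let := Ideal.Quotient.field m
  have : Module.Finite 𝕂 (R ⧸ m) := finite_of_finite_type_of_isJacobsonRing 𝕂 (R ⧸ m)
  let e : 𝕂 ≃ₐ[𝕂] R ⧸ m :=
    AlgEquiv.ofBijective (Algebra.ofId 𝕂 (R ⧸ m)) IsAlgClosed.algebraMap_bijective_of_isIntegral
  refine ⟨(e.symm : R ⧸ m →ₐ[𝕂] 𝕂).comp (Ideal.Quotient.mkₐ 𝕂 m), ?_⟩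
  ext x
  simp [Ideal.Quotient.eq_zero_iff_mem]

theorem eq_zero_of_forall_algHom_eq_zero {𝕂 R : Type*} [Field 𝕂] [IsAlgClosed 𝕂] [CommRing R]
    [IsReduced R] [Algebra 𝕂 R] [Algebra.FiniteType 𝕂 R] {x : R}
    (hx : ∀ φ : R →ₐ[𝕂] 𝕂, φ x = 0) : x = 0 := by
  have : IsJacobsonRing R := isJacobsonRing_of_finiteType (A := 𝕂)
  have hjac : x ∈ (⊥ : Ideal R).jacobson := Ideal.mem_sInf.mpr fun m ⟨_, hm⟩ => by
    obtain ⟨φ, rfl⟩ := hm.exists_algHom_ker_eq (𝕂 := 𝕂)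
    exact hx φ
  rwa [IsJacobsonRing.out this Ideal.isRadical_bot, Ideal.mem_bot] at hjac

namespace Algebra.TensorProduct

variable {𝕂 A A' S ι : Type*} [CommRing 𝕂] [CommRing A] [CommRing A'] [Ring S]
  [Algebra 𝕂 A] [Algebra 𝕂 A'] [Algebra 𝕂 S] (b : Module.Basis ι 𝕂 S)

theorem basis_repr_map (f : A →ₐ[𝕂] A') (z : A ⊗[𝕂] S) (i : ι) :
    (basis A' b).repr (map f (AlgHom.id 𝕂 S) z) i = f ((basis A b).repr z i) := by
  induction z using TensorProduct.induction_on with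
  | zero => simp
  | tmul a s => simp [basis_repr_tmul]
  | add x y hx hy => simp [hx, hy]

theorem map_id_eq_zero_iff (f : A →ₐ[𝕂] A') (z : A ⊗[𝕂] S) :
    map f (AlgHom.id 𝕂 S) z = 0 ↔ ∀ i, f ((basis A b).repr z i) = 0 := by
  simp only [← (basis A' b).repr.map_eq_zero_iff, Finsupp.ext_iff, basis_repr_map,
    Finsupp.coe_zero, Pi.zero_apply]

end Algebra.TensorProduct

open Algebra.TensorProduct in
theorem noZeroDivisors_tensorProduct_of_forall_algHom_eq_zero {𝕂 R S : Type*} [Field 𝕂]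
    [CommRing R] [CommRing S] [Algebra 𝕂 R] [Algebra 𝕂 S] [NoZeroDivisors R] [NoZeroDivisors S]
    (hR : ∀ x : R, (∀ φ : R →ₐ[𝕂] 𝕂, φ x = 0) → x = 0) : NoZeroDivisors (R ⊗[𝕂] S) := by
  refine ⟨fun {z w} hzw => ?_⟩
  let b := Module.Basis.ofVectorSpace 𝕂 S
  have : NoZeroDivisors (𝕂 ⊗[𝕂] S) := (Algebra.TensorProduct.lid 𝕂 S).toMulEquiv.noZeroDivisors
  have hcoeff (i j) : (basis R b).repr z i * (basis R b).repr w j = 0 := by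
    refine hR _ fun φ => ?_
    have hφ : map φ (AlgHom.id 𝕂 S) z * map φ (AlgHom.id 𝕂 S) w = 0 := by
      rw [← map_mul, hzw, map_zero]
    rw [map_mul]
    rcases mul_eq_zero.mp hφ with h | h
    · rw [(map_id_eq_zero_iff b φ z).mp h i, zero_mul]
    · rw [(map_id_eq_zero_iff b φ w).mp h j, mul_zero]
  by_contra! h
  obtain ⟨i, hi⟩ := Finsupp.ne_iff.mp ((basis R b).repr.map_ne_zero_iff.mpr h.1)
  obtain ⟨j, hj⟩ := Finsupp.ne_iff.mp ((basis R b).repr.map_ne_zero_iff.mpr h.2)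
  exact mul_ne_zero hi hj (hcoeff i j)

theorem tensorProduct_isDomain_general (𝕂 : Type*) [Field 𝕂] [IsAlgClosed 𝕂]
    (R S : Type*) [CommRing R] [CommRing S] [Algebra 𝕂 R] [Algebra 𝕂 S]
    [IsDomain R] [IsDomain S]
    (hR : Algebra.FiniteType 𝕂 R) :
    IsDomain (R ⊗[𝕂] S) :=
  have : NoZeroDivisors (R ⊗[𝕂] S) :=
    noZeroDivisors_tensorProduct_of_forall_algHom_eq_zero fun _ => eq_zero_of_forall_algHom_eq_zero
  NoZeroDivisors.to_isDomain _

/-- Over an algebraically closed field, the tensor product of two finitely generated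
integral domains is an integral domain. -/
theorem tensorProduct_isDomain (𝕂 : Type*) [Field 𝕂] [IsAlgClosed 𝕂]
    (R S : Type*) [CommRing R] [CommRing S] [Algebra 𝕂 R] [Algebra 𝕂 S]
    [IsDomain R] [IsDomain S]
    (hR : Algebra.FiniteType 𝕂 R) (hS : Algebra.FiniteType 𝕂 S) :
    IsDomain (R ⊗[𝕂] S) :=
  tensorProduct_isDomain_general 𝕂 R S hR
end
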